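/- In H_{n+1}(q,∞) (and, for k+1 ≤ d−1, in H_{n+1}(q,d)), for k ∈ ℕ and ε ∈ {+1, −1}: t_n^{ε(k+1)} = Σ_{r₁, …, r_k = 0}^{n} (q^ε − 1)^{ε_{r₁} + ⋯ + ε_{r_k}} q^{ε(r₁ + ⋯ + r_k)} · g_n^ε g_{n−1}^ε ⋯ g_1^ε t^ε (g_1^ε ⋯ g_{n−r₁}^ε ⋯ g_1^ε) t^ε ⋯ t^ε (g_1^ε ⋯ g_{n−r_k}^ε ⋯ g_1^ε) t^ε g_1^ε ⋯ g_{n−1}^ε g_n^ε, where ε_{r_i} = 1 if r_i ∈ {0, …, n−1}, ε_n = 0, and g_0^ε := 1 (so (g_1^ε ⋯ g_{n−r}^ε ⋯ g_1^ε) denotes the palindromic word g_1^ε g_2^ε ⋯ g_{n−r}^ε g_{n−r−1}^ε ⋯ g_1^ε, equal to 1 when r = n). -/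

import Mathlib

/-!
Knot theory related to generalized and cyclotomic Hecke algebras of type B
(S. Lambropoulou). Generic setting: an algebra containing invertible elements
`t, g_1, …, g_m` and a central invertible parameter `q` satisfying the defining
relations of the generalized type-`B` Hecke algebra `H_{m+1}(q,∞)`; both
`H_{m+1}(q,∞)` and the cyclotomic algebras `H_{m+1}(q,d)` are instances.
-/

namespace KnotTypeB

variable {A : Type*} [Ring A]

/-- The ascending word `g_i^e g_{i+1}^e ⋯ g_j^e` (the empty product `1` if `j + 1 ≤ i`). -/
def ascW (g : ℕ → Aˣ) (e : ℤ) (i j : ℕ) : A :=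
  ((List.range' i (j + 1 - i)).map fun l => ((g l ^ e : Aˣ) : A)).prod

/-- The descending word `g_j^e g_{j-1}^e ⋯ g_i^e` (the empty product `1` if `j + 1 ≤ i`). -/
def descW (g : ℕ → Aˣ) (e : ℤ) (j i : ℕ) : A :=
  ((List.range' i (j + 1 - i)).reverse.map fun l => ((g l ^ e : Aˣ) : A)).prod

/-- The palindromic word `g_i^e g_{i+1}^e ⋯ g_{m-1}^e g_m^e g_{m-1}^e ⋯ g_i^e`
(interpreted as `1` when `m < i`). -/
def palW (g : ℕ → Aˣ) (e : ℤ) (i m : ℕ) : A :=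
  ascW g e i m * descW g e (m - 1) i

/-- `t_i = g_i g_{i-1} ⋯ g_1 t g_1 ⋯ g_{i-1} g_i` (as a unit), `t_0 = t`. -/
def tW (g : ℕ → Aˣ) (t : Aˣ) : ℕ → Aˣ
  | 0 => t
  | i + 1 => g (i + 1) * tW g t i * g (i + 1)

/-- `t'_i = g_i g_{i-1} ⋯ g_1 t g_1⁻¹ ⋯ g_{i-1}⁻¹ g_i⁻¹` (as a unit), `t'_0 = t`. -/
def tpW (g : ℕ → Aˣ) (t : Aˣ) : ℕ → Aˣ
  | 0 => t
  | i + 1 => g (i + 1) * tpW g t i * (g (i + 1))⁻¹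

/-- `T_i^k = g_i g_{i-1} ⋯ g_1 t^k g_1 ⋯ g_{i-1} g_i` (as a unit), `T_0^k = t^k`. -/
def TTW (g : ℕ → Aˣ) (t : Aˣ) (k : ℤ) : ℕ → Aˣ
  | 0 => t ^ k
  | i + 1 => g (i + 1) * TTW g t k i * g (i + 1)

/-- The defining relations of the generalized Iwahori–Hecke algebra of type `B` with
invertible generators `t, g_1, …, g_m` and a central invertible parameter `q`:
the type-`B` braid relations together with the quadratic relations
`g_i² = (q-1)g_i + q`.  Any ring admitting such elements is (the image of) a
`ℤ[q^{±1}]`-algebra quotient of `H_{m+1}(q,∞)`; in particular the cyclotomic algebras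
`H_{m+1}(q,d)` also satisfy these hypotheses. -/
def HeckeRels (q t : Aˣ) (g : ℕ → Aˣ) (m : ℕ) : Prop :=
  (∀ a : A, (q : A) * a = a * (q : A)) ∧
  (∀ i, 1 ≤ i → i + 1 ≤ m → (g i : A) * g (i + 1) * g i = (g (i + 1) : A) * g i * g (i + 1)) ∧
  (∀ i j, 1 ≤ i → i + 1 < j → j ≤ m → (g i : A) * g j = (g j : A) * g i) ∧
  (1 ≤ m → (t : A) * g 1 * t * g 1 = (g 1 : A) * t * g 1 * t) ∧
  (∀ i, 2 ≤ i → i ≤ m → (t : A) * g i = (g i : A) * t) ∧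
  (∀ i, 1 ≤ i → i ≤ m → (g i : A) ^ 2 = ((q : A) - 1) * g i + (q : A))

/-!
Write `t_n^ε = D t^ε U` with `D = g_n^ε ⋯ g_1^ε` and `U = g_1^ε ⋯ g_n^ε`, so that
`t_n^{ε(k+1)} = D t^ε (U D t^ε)^k U`. The elements `g_i^ε` satisfy the quadratic relation with
`q` replaced by `q^ε`; applying it to the middle pair `g_n^ε g_n^ε` of `U D` and inducting on `n`
gives `U D = ∑_r (q^ε - 1)^{ε_r} q^{ε r} (g_1^ε ⋯ g_{n-r}^ε ⋯ g_1^ε)`. As `q^ε` is central, the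
`k`-th power of this sum expands multilinearly into the stated formula.
-/

lemma zpow_mul_mul_self {G : Type*} [Group G] (a b : G) {e : ℤ} (he : e = 1 ∨ e = -1) :
    (a * b * a) ^ e = a ^ e * b ^ e * a ^ e := by
  rcases he with rfl | rfl <;> simp [mul_assoc]

section Words

variable (g : ℕ → Aˣ) (e : ℤ)

@[simp] lemma ascW_one_zero : ascW g e 1 0 = (1 : A) := by simp [ascW]

@[simp] lemma descW_zero_one : descW g e 0 1 = (1 : A) := by simp [descW]

lemma ascW_one_succ (n : ℕ) :
    ascW g e 1 (n + 1) = ascW g e 1 n * ((g (n + 1) ^ e : Aˣ) : A) := by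
  simp [ascW, List.range'_concat, Nat.add_comm 1 n]

lemma descW_succ_one (n : ℕ) :
    descW g e (n + 1) 1 = ((g (n + 1) ^ e : Aˣ) : A) * descW g e n 1 := by
  simp [descW, List.range'_concat, Nat.add_comm 1 n]

@[simp] lemma palW_one_zero : palW g e 1 0 = (1 : A) := by
  simp [palW]

lemma palW_one_succ (n : ℕ) : palW g e 1 (n + 1) = ascW g e 1 (n + 1) * descW g e n 1 := rfl

lemma tW_zpow (t : Aˣ) (he : e = 1 ∨ e = -1) (n : ℕ) :
    ((tW g t n ^ e : Aˣ) : A) = descW g e n 1 * ((t ^ e : Aˣ) : A) * ascW g e 1 n := by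
  induction n with
  | zero => simp [tW]
  | succ n ih =>
    rw [tW, zpow_mul_mul_self _ _ he, Units.val_mul, Units.val_mul, ih, descW_succ_one,
      ascW_one_succ]
    simp only [mul_assoc]

end Words

lemma sq_inv_of_sq_eq {q x : Aˣ} (h : (x : A) ^ 2 = ((q : A) - 1) * x + q) :
    ((x⁻¹ : Aˣ) : A) ^ 2 = (((q⁻¹ : Aˣ) : A) - 1) * ↑x⁻¹ + ↑q⁻¹ := by
  set xi : A := ↑x⁻¹
  set qi : A := ↑q⁻¹
  have hxxi : (x : A) ^ 2 * xi ^ 2 = 1 := by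
    rw [← Units.val_pow_eq_pow_val, ← Units.val_pow_eq_pow_val, ← Units.val_mul, inv_pow,
      mul_inv_cancel, Units.val_one]
  -- right-multiply the quadratic relation by `x⁻²`, then left-multiply by `q⁻¹`
  have h1 : 1 = ((q : A) - 1) * xi + q * xi ^ 2 := calc
    1 = (x : A) ^ 2 * xi ^ 2 := hxxi.symm
    _ = ((q : A) - 1) * (x * xi) * xi + q * xi ^ 2 := by
      rw [h, add_mul, sq xi]; simp only [mul_assoc]
    _ = ((q : A) - 1) * xi + q * xi ^ 2 := by rw [Units.mul_inv, mul_one]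
  have h2 : qi = (1 - qi) * xi + xi ^ 2 := calc
    qi = qi * (((q : A) - 1) * xi + q * xi ^ 2) := by rw [← h1, mul_one]
    _ = (qi * q - qi) * xi + qi * q * xi ^ 2 := by noncomm_ring
    _ = (1 - qi) * xi + xi ^ 2 := by rw [Units.inv_mul, one_mul]
  calc xi ^ 2 = (qi - 1) * xi + ((1 - qi) * xi + xi ^ 2) := by noncomm_ring
    _ = (qi - 1) * xi + qi := by rw [← h2]

lemma sq_zpow_of_sq_eq {q x : Aˣ} (h : (x : A) ^ 2 = ((q : A) - 1) * x + q) (e : ℤ)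
    (he : e = 1 ∨ e = -1) :
    ((x ^ e : Aˣ) : A) ^ 2 = (((q ^ e : Aˣ) : A) - 1) * ↑(x ^ e) + ↑(q ^ e) := by
  rcases he with rfl | rfl
  · simpa using h
  · simpa using sq_inv_of_sq_eq h

section Expansion

variable {R : Type*} [CommRing R] [Algebra R A]

lemma sum_smul_pow {ι : Type*} [Fintype ι] (c : ι → R) (b : ι → A) (k : ℕ) :
    (∑ i, c i • b i) ^ k =
      ∑ r : Fin k → ι, (∏ j, c (r j)) • (List.ofFn fun j => b (r j)).prod := by
  have := (MultilinearMap.mkPiAlgebraFin R k A).map_sum fun _ i => c i • b i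
  simpa [MultilinearMap.map_smul_univ] using this

lemma ascW_mul_descW_eq_sum (g : ℕ → Aˣ) (e : ℤ) (Q : R) (n : ℕ)
    (hquad : ∀ i, 1 ≤ i → i ≤ n →
      ((g i ^ e : Aˣ) : A) ^ 2 = (Q - 1) • ((g i ^ e : Aˣ) : A) + algebraMap R A Q) :
    ascW g e 1 n * descW g e n 1 =
      ∑ r : Fin (n + 1),
        ((Q - 1) ^ (if (r : ℕ) < n then 1 else 0) * Q ^ (r : ℕ)) • palW g e 1 (n - r) := by
  induction n with
  | zero => simp
  | succ n ih =>
    have hsplit : ascW g e 1 (n + 1) * descW g e (n + 1) 1 =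
        (Q - 1) • palW g e 1 (n + 1) + Q • (ascW g e 1 n * descW g e n 1) := calc
      _ = ascW g e 1 n * ((g (n + 1) ^ e : Aˣ) : A) ^ 2 * descW g e n 1 := by
        rw [ascW_one_succ, descW_succ_one, sq]; simp only [mul_assoc]
      _ = _ := by
        rw [hquad (n + 1) (by omega) le_rfl, Algebra.algebraMap_eq_smul_one, palW_one_succ,
          ascW_one_succ, mul_add, add_mul, mul_smul_comm, mul_smul_comm, mul_one,
          smul_mul_assoc, smul_mul_assoc]
    rw [hsplit, ih fun i h1 h2 => hquad i h1 (by omega), Fin.sum_univ_succ (n := n + 1),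
      Finset.smul_sum]
    congr 1
    · simp
    · refine Finset.sum_congr rfl fun i _ => ?_
      rw [smul_smul, Fin.val_succ, Nat.add_sub_add_right]
      congr 1
      simp only [Nat.add_lt_add_iff_right, pow_succ]
      ring

lemma tW_zpow_succ_eq_sum (g : ℕ → Aˣ) (t : Aˣ) (e : ℤ) (he : e = 1 ∨ e = -1) (Q : R) (n : ℕ)
    (hquad : ∀ i, 1 ≤ i → i ≤ n →
      ((g i ^ e : Aˣ) : A) ^ 2 = (Q - 1) • ((g i ^ e : Aˣ) : A) + algebraMap R A Q) (k : ℕ) :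
    ((tW g t n ^ (e * ((k : ℤ) + 1)) : Aˣ) : A) =
      ∑ r : Fin k → Fin (n + 1),
        ((Q - 1) ^ (Finset.univ.filter fun i => ((r i : ℕ) < n)).card * Q ^ (∑ i, (r i : ℕ))) •
          (descW g e n 1 * ((t ^ e : Aˣ) : A) *
            ((List.finRange k).map fun i => palW g e 1 (n - (r i : ℕ)) * ((t ^ e : Aˣ) : A)).prod *
            ascW g e 1 n) := by
  set D := descW g e n 1
  set T : A := ((t ^ e : Aˣ) : A)
  set U := ascW g e 1 n
  have hpow : ((tW g t n ^ (e * ((k : ℤ) + 1)) : Aˣ) : A) = (D * T * U) ^ (k + 1) := by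
    rw [zpow_mul, ← tW_zpow g e t he, ← Units.val_pow_eq_pow_val]
    norm_cast
  have hUDT : U * (D * T) = ∑ r : Fin (n + 1),
      ((Q - 1) ^ (if (r : ℕ) < n then 1 else 0) * Q ^ (r : ℕ)) • (palW g e 1 (n - r) * T) := by
    rw [← mul_assoc, ascW_mul_descW_eq_sum g e Q n hquad, Finset.sum_mul]
    simp only [smul_mul_assoc]
  have hcoeff (r : Fin k → Fin (n + 1)) :
      ∏ j, ((Q - 1) ^ (if (r j : ℕ) < n then 1 else 0) * Q ^ (r j : ℕ)) =
        (Q - 1) ^ (Finset.univ.filter fun i => ((r i : ℕ) < n)).card * Q ^ (∑ i, (r i : ℕ)) := by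
    rw [Finset.prod_mul_distrib, Finset.prod_pow_eq_pow_sum, Finset.prod_pow_eq_pow_sum,
      Finset.card_filter]
  calc _ = D * T * (U * (D * T)) ^ k * U := by
        rw [hpow, pow_succ, ← mul_assoc, mul_pow_mul]
    _ = _ := by
      rw [hUDT, sum_smul_pow, Finset.mul_sum, Finset.sum_mul]
      refine Finset.sum_congr rfl fun r _ => ?_
      rw [hcoeff, mul_smul_comm, smul_mul_assoc, List.ofFn_eq_map]

end Expansion

/-- Lemma 3.  In `H_{n+1}(q,∞)` (and, for `k+1 ≤ d-1`, in
`H_{n+1}(q,d)`), for `k ∈ ℕ` and `ε ∈ {+1, -1}`: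
`t_n^{ε(k+1)} = ∑_{r₁,…,r_k=0}^{n} (q^ε-1)^{ε_{r₁}+⋯+ε_{r_k}} q^{ε(r₁+⋯+r_k)} ·
   g_n^ε ⋯ g_1^ε t^ε (g_1^ε ⋯ g_{n-r₁}^ε ⋯ g_1^ε) t^ε ⋯ t^ε (g_1^ε ⋯ g_{n-r_k}^ε ⋯ g_1^ε)
   t^ε g_1^ε ⋯ g_n^ε`,
where `ε_{r} = 1` if `r ≤ n-1` and `ε_n = 0`, and `g_0^ε := 1` (so the palindromic factor
is `1` when `r = n`). -/
theorem statement_10 {A : Type*} [Ring A] (q t : Aˣ) (g : ℕ → Aˣ) (n : ℕ)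
    (hrel : HeckeRels q t g n) (e : ℤ) (he : e = 1 ∨ e = -1) (k : ℕ) :
    ((tW g t n ^ (e * ((k : ℤ) + 1)) : Aˣ) : A) =
      ∑ r : Fin k → Fin (n + 1),
        (((q ^ e : Aˣ) : A) - 1) ^ (Finset.univ.filter fun i => ((r i : ℕ) < n)).card *
          ((q ^ e : Aˣ) : A) ^ (∑ i, (r i : ℕ)) *
          (descW g e n 1 * ((t ^ e : Aˣ) : A) *
            ((List.finRange k).map fun i =>
              palW g e 1 (n - (r i : ℕ)) * ((t ^ e : Aˣ) : A)).prod *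
            ascW g e 1 n) := by
  obtain ⟨hq_central, -, -, -, -, hquad⟩ := hrel
  -- `q^e` is central, so the scalars of the expansion can be taken in the center of `A`
  let Q : Subring.center A := ⟨((q ^ e : Aˣ) : A), Subring.mem_center_iff.2 fun a =>
    ((Commute.units_zpow_left (hq_central a) e).symm)⟩
  have hquadQ : ∀ i, 1 ≤ i → i ≤ n →
      ((g i ^ e : Aˣ) : A) ^ 2 = (Q - 1) • ((g i ^ e : Aˣ) : A) + algebraMap _ A Q :=
    fun i h1 h2 => sq_zpow_of_sq_eq (hquad i h1 h2) e he
  rw [tW_zpow_succ_eq_sum g t e he Q n hquadQ k]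
  refine Finset.sum_congr rfl fun r _ => ?_
  rw [Algebra.smul_def]
  rfl

end KnotTypeB
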